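/- Define H(p) = sup { λ ∈ ℝ : ∃ φ ∈ C(𝕋^d), φ > 0, such that −∫_{ℝ^d} J(ξ−η) e^{p·(ξ−η)} κ(ξ,η) φ(η) dη + a(ξ) φ(ξ) ≥ λ φ(ξ) for all ξ }, where J ≥ 0 is continuous with J(0) > 0 and J(z) ≤ C e^{−|z|^{1+β}}, κ > 0 continuous on 𝕋^d × 𝕋^d, a continuous on 𝕋^d. Then H(p) ≤ min_{ξ} a(ξ) for all p ∈ ℝ^d. -/

import Mathlib

/-!
Testing the defining inequality at a point `ξ` with `φ ξ > 0` and dropping the nonnegative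
integral gives `λ ≤ a ξ` for every admissible `λ`. The only work is to show that the set of
admissible `λ` is nonempty, so that its supremum is not the junk value `sSup ∅ = 0`: for `φ ≡ 1`
the integral is bounded uniformly in `ξ`, because `e^{p·z - |z|^{1+β}}` is dominated by an
integrable product `e^B ∏ e^{-|z_i|}`, while `κ` and `-a` are bounded by periodicity and continuity.
-/
open MeasureTheory Set

lemma exists_unitCube_add_intCast {ι : Type*} (x : ι → ℝ) :
    ∃ u ∈ Icc (0 : ι → ℝ) 1, ∃ l : ι → ℤ, (u + fun i => (l i : ℝ)) = x :=
  ⟨fun i => Int.fract (x i), ⟨fun _ => Int.fract_nonneg _, fun _ => (Int.fract_lt_one _).le⟩,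
    fun i => ⌊x i⌋, funext fun i => Int.fract_add_floor (x i)⟩

section IntPeriodic

variable {ι α : Type*} [LinearOrder α] [TopologicalSpace α]

theorem Continuous.exists_forall_le_of_intPeriodic [ClosedIicTopology α] {f : (ι → ℝ) → α}
    (hf : Continuous f) (hper : ∀ (l : ι → ℤ) x, f (x + fun i => (l i : ℝ)) = f x) :
    ∃ x₀, ∀ x, f x₀ ≤ f x := by
  obtain ⟨x₀, -, hmin⟩ :=
    isCompact_Icc.exists_isMinOn (nonempty_Icc.mpr zero_le_one) hf.continuousOn
  refine ⟨x₀, fun x => ?_⟩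
  obtain ⟨u, hu, l, rfl⟩ := exists_unitCube_add_intCast x
  exact (hper l u).symm ▸ hmin hu

theorem exists_forall_ge_of_intPeriodic₂ [ClosedIciTopology α]
    {f : (ι → ℝ) → (ι → ℝ) → α} (hf : Continuous fun q : (ι → ℝ) × (ι → ℝ) => f q.1 q.2)
    (hper₁ : ∀ (l : ι → ℤ) x y, f (x + fun i => (l i : ℝ)) y = f x y)
    (hper₂ : ∀ (l : ι → ℤ) x y, f x (y + fun i => (l i : ℝ)) = f x y) :
    ∃ x₀ y₀, ∀ x y, f x y ≤ f x₀ y₀ := by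
  obtain ⟨⟨x₀, y₀⟩, -, hmax⟩ := (isCompact_Icc.prod isCompact_Icc).exists_isMaxOn
    ((nonempty_Icc.mpr zero_le_one).prod (nonempty_Icc.mpr zero_le_one)) hf.continuousOn
  refine ⟨x₀, y₀, fun x y => ?_⟩
  obtain ⟨u, hu, l, rfl⟩ := exists_unitCube_add_intCast x
  obtain ⟨v, hv, l', rfl⟩ := exists_unitCube_add_intCast y
  rw [hper₁, hper₂]
  exact hmax (mk_mem_prod hu hv)

end IntPeriodic

lemma exists_mul_sub_rpow_one_add_le {β : ℝ} (hβ : 0 < β) (Q : ℝ) :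
    ∃ B, ∀ s, 0 ≤ s → Q * s - s ^ (1 + β) ≤ B := by
  set R := |Q| ^ (1 / β)
  refine ⟨|Q| * R, fun s hs => ?_⟩
  have hQs : Q * s ≤ |Q| * s := mul_le_mul_of_nonneg_right (le_abs_self Q) hs
  have hpow : s ^ (1 + β) = s * s ^ β := Real.rpow_one_add' hs (by positivity)
  rcases le_or_gt s R with hsR | hRs
  · have : |Q| * s ≤ |Q| * R := mul_le_mul_of_nonneg_left hsR (abs_nonneg Q)
    have : 0 ≤ s * s ^ β := by positivity
    linarith
  · have hQ : |Q| ≤ s ^ β := calc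
      |Q| = R ^ β := by
        rw [← Real.rpow_mul (abs_nonneg Q), one_div_mul_cancel hβ.ne', Real.rpow_one]
      _ ≤ s ^ β := Real.rpow_le_rpow (by positivity) hRs.le hβ.le
    have : |Q| * s ≤ s * s ^ β := by nlinarith
    have : 0 ≤ |Q| * R := by positivity
    linarith

lemma integrable_exp_neg_abs : Integrable fun x : ℝ => Real.exp (-|x|) := by
  rw [← integrableOn_univ, ← Iic_union_Ioi (a := 0)]
  refine ((integrableOn_exp_mul_Iic one_pos 0).congr_fun (fun x hx => ?_) measurableSet_Iic).union
    ((integrableOn_exp_mul_Ioi neg_one_lt_zero 0).congr_fun (fun x hx => ?_) measurableSet_Ioi)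
  · simp [abs_of_nonpos (show x ≤ 0 from hx)]
  · simp [abs_of_pos (show 0 < x from hx)]

lemma exists_integrable_majorant_exp_mul_exp_neg_rpow {ι : Type*} [Fintype ι] {β : ℝ}
    (hβ : 0 < β) (p : ι → ℝ) :
    ∃ G : (ι → ℝ) → ℝ, Integrable G ∧ ∀ z,
      Real.exp (∑ i, p i * z i) * Real.exp (-(Real.sqrt (∑ i, z i ^ 2)) ^ (1 + β)) ≤ G z := by
  -- `|p| s` bounds the tilt `p · z` and `card ι * s` pays for the factor `∏ e^{-|z_i|}`.
  obtain ⟨B, hB⟩ :=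
    exists_mul_sub_rpow_one_add_le hβ (Real.sqrt (∑ i, p i ^ 2) + Fintype.card ι)
  refine ⟨fun z => Real.exp B * ∏ i, Real.exp (-|z i|),
    (Integrable.fintype_prod fun _ => integrable_exp_neg_abs).const_mul _, fun z => ?_⟩
  set s := Real.sqrt (∑ i, z i ^ 2)
  have hs : 0 ≤ s := Real.sqrt_nonneg _
  have hpz : ∑ i, p i * z i ≤ Real.sqrt (∑ i, p i ^ 2) * s :=
    Real.sum_mul_le_sqrt_mul_sqrt _ p z
  have habs : ∑ i, |z i| ≤ Fintype.card ι * s := by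
    simpa using Finset.sum_le_card_nsmul Finset.univ (fun i => |z i|) s fun i _ =>
      Real.abs_le_sqrt (Finset.single_le_sum (fun j _ => sq_nonneg (z j)) (Finset.mem_univ i))
  have := hB s hs
  dsimp only
  rw [← Real.exp_add, ← Real.exp_sum, ← Real.exp_add]
  exact Real.exp_le_exp.mpr (by simp only [Finset.sum_neg_distrib]; nlinarith)

lemma integral_le_integral_of_le_comp_sub {G : Type*} [MeasurableSpace G] [AddGroup G]
    [MeasurableAdd G] [MeasurableNeg G] {μ : Measure G} [μ.IsNegInvariant] [μ.IsAddLeftInvariant]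
    {f g : G → ℝ} (ξ : G) (hf : 0 ≤ f) (hg : Integrable g μ) (hfg : ∀ η, f η ≤ g (ξ - η)) :
    ∫ η, f η ∂μ ≤ ∫ z, g z ∂μ := by
  rw [← integral_sub_left_eq_self g μ ξ]
  exact integral_mono_of_nonneg (.of_forall hf) ((integrable_comp_sub_left g ξ).mpr hg)
    (.of_forall hfg)

theorem stmt11_general (d : ℕ) (J : (Fin d → ℝ) → ℝ) (κ : (Fin d → ℝ) → (Fin d → ℝ) → ℝ)
    (a : (Fin d → ℝ) → ℝ) (C β : ℝ) (hC : 0 < C) (hβ : 0 < β)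
    (hJbd : ∀ z, 0 ≤ J z ∧ J z ≤ C * Real.exp (-(Real.sqrt (∑ i, z i ^ 2)) ^ (1 + β)))
    (hκc : Continuous fun p : (Fin d → ℝ) × (Fin d → ℝ) => κ p.1 p.2)
    (hκpos : ∀ x y, 0 < κ x y)
    (hκper : ∀ (l : Fin d → ℤ) (x y : Fin d → ℝ),
      κ (x + fun i => (l i : ℝ)) y = κ x y ∧ κ x (y + fun i => (l i : ℝ)) = κ x y)
    (hac : Continuous a)
    (haper : ∀ (l : Fin d → ℤ) (x : Fin d → ℝ), a (x + fun i => (l i : ℝ)) = a x)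
    (p : Fin d → ℝ) :
    sSup {lam : ℝ | ∃ φ : (Fin d → ℝ) → ℝ, Continuous φ ∧
        (∀ (l : Fin d → ℤ) (ξ : Fin d → ℝ), φ (ξ + fun i => (l i : ℝ)) = φ ξ) ∧
        (∀ ξ, 0 < φ ξ) ∧
        ∀ ξ, lam * φ ξ ≤ a ξ * φ ξ -
          ∫ η, J (ξ - η) * Real.exp (∑ i, p i * (ξ i - η i)) * κ ξ η * φ η}
      ≤ ⨅ ξ : Fin d → ℝ, a ξ := by
  obtain ⟨x₀, ha⟩ := hac.exists_forall_le_of_intPeriodic haper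
  obtain ⟨y₁, y₂, hκ⟩ := exists_forall_ge_of_intPeriodic₂ hκc (fun l x y => (hκper l x y).1)
    (fun l x y => (hκper l x y).2)
  obtain ⟨G, hG, hGle⟩ := exists_integrable_majorant_exp_mul_exp_neg_rpow hβ p
  have hkernel : ∀ ξ η, 0 ≤ J (ξ - η) * Real.exp (∑ i, p i * (ξ i - η i)) * κ ξ η ∧
      J (ξ - η) * Real.exp (∑ i, p i * (ξ i - η i)) * κ ξ η ≤ C * κ y₁ y₂ * G (ξ - η) := by
    intro ξ η
    obtain ⟨hJ0, hJ⟩ := hJbd (ξ - η)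
    refine ⟨by have := hκpos ξ η; positivity, ?_⟩
    calc J (ξ - η) * Real.exp (∑ i, p i * (ξ i - η i)) * κ ξ η
        ≤ C * Real.exp (-(Real.sqrt (∑ i, (ξ - η) i ^ 2)) ^ (1 + β))
            * Real.exp (∑ i, p i * (ξ - η) i) * κ y₁ y₂ := by
          gcongr ?_ * _ * ?_
          exacts [(hκpos ξ η).le, hκ ξ η]
      _ = C * κ y₁ y₂ * (Real.exp (∑ i, p i * (ξ - η) i)
            * Real.exp (-(Real.sqrt (∑ i, (ξ - η) i ^ 2)) ^ (1 + β))) := by ring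
      _ ≤ C * κ y₁ y₂ * G (ξ - η) := by
          gcongr
          · exact (mul_pos hC (hκpos y₁ y₂)).le
          · exact hGle (ξ - η)
  refine csSup_le ⟨a x₀ - ∫ z, C * κ y₁ y₂ * G z, fun _ => 1, continuous_const, fun _ _ => rfl,
    fun _ => one_pos, fun ξ => ?_⟩ ?_
  · have := integral_le_integral_of_le_comp_sub ξ (fun η => (hkernel ξ η).1)
      (hG.const_mul (C * κ y₁ y₂)) (fun η => (hkernel ξ η).2)
    simp only [mul_one]
    linarith [ha ξ]
  · rintro lam ⟨φ, -, -, hφpos, hφ⟩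
    refine le_ciInf fun ξ => le_of_mul_le_mul_right ?_ (hφpos ξ)
    have : 0 ≤ ∫ η, J (ξ - η) * Real.exp (∑ i, p i * (ξ i - η i)) * κ ξ η * φ η :=
      integral_nonneg fun η => mul_nonneg (hkernel ξ η).1 (hφpos η).le
    linarith [hφ ξ]

theorem stmt11 (d : ℕ) (J : (Fin d → ℝ) → ℝ) (κ : (Fin d → ℝ) → (Fin d → ℝ) → ℝ)
    (a : (Fin d → ℝ) → ℝ) (C β : ℝ) (hC : 0 < C) (hβ : 0 < β)
    (hJc : Continuous J) (hJ0 : 0 < J 0)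
    (hJbd : ∀ z, 0 ≤ J z ∧ J z ≤ C * Real.exp (-(Real.sqrt (∑ i, z i ^ 2)) ^ (1 + β)))
    (hκc : Continuous fun p : (Fin d → ℝ) × (Fin d → ℝ) => κ p.1 p.2)
    (hκpos : ∀ x y, 0 < κ x y)
    (hκper : ∀ (l : Fin d → ℤ) (x y : Fin d → ℝ),
      κ (x + fun i => (l i : ℝ)) y = κ x y ∧ κ x (y + fun i => (l i : ℝ)) = κ x y)
    (hac : Continuous a)
    (haper : ∀ (l : Fin d → ℤ) (x : Fin d → ℝ), a (x + fun i => (l i : ℝ)) = a x)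
    (p : Fin d → ℝ) :
    sSup {lam : ℝ | ∃ φ : (Fin d → ℝ) → ℝ, Continuous φ ∧
        (∀ (l : Fin d → ℤ) (ξ : Fin d → ℝ), φ (ξ + fun i => (l i : ℝ)) = φ ξ) ∧
        (∀ ξ, 0 < φ ξ) ∧
        ∀ ξ, lam * φ ξ ≤ a ξ * φ ξ -
          ∫ η, J (ξ - η) * Real.exp (∑ i, p i * (ξ i - η i)) * κ ξ η * φ η}
      ≤ ⨅ ξ : Fin d → ℝ, a ξ :=
  stmt11_general d J κ a C β hC hβ hJbd hκc hκpos hκper hac haper p
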